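/- Let Δ > 0 and ε with 0 < ε ≤ Δ. For real numbers a_x, a_y, w_x, w_y with a_x + w_x > a_y + w_y, and finish times f_x < f_y, define e¹_x = f_x - (a_x + w_x), e¹_y = f_y - (a_y + w_y) (FIFO order) and e²_x = f_y - (a_x + w_x), e²_y = f_x - (a_y + w_y) (swapped order). Then e¹_x + e¹_y = e²_x + e²_y and max(e¹_x, e¹_y) > max(e²_x, e²_y), and consequently |e¹_x| + |e¹_y| ≥ |e²_x| + |e²_y|. -/
import Mathlib

/-- Exchange lemma: swapping two tasks so that the one with earlier expectation
deadline `a + w` is served first preserves total lateness, strictly decreases the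
maximum lateness, and weakly decreases the sum of absolute lateness values. -/
theorem stmt_0 (Δ ε : ℝ) (hΔ : 0 < Δ) (hε : 0 < ε) (hεΔ : ε ≤ Δ)
    (ax ay wx wy fx fy : ℝ)
    (hexp : ax + wx > ay + wy) (hf : fx < fy) :
    (fx - (ax + wx)) + (fy - (ay + wy)) = (fy - (ax + wx)) + (fx - (ay + wy)) ∧
    max (fx - (ax + wx)) (fy - (ay + wy)) > max (fy - (ax + wx)) (fx - (ay + wy)) ∧
    |fx - (ax + wx)| + |fy - (ay + wy)| ≥ |fy - (ax + wx)| + |fx - (ay + wy)| := by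
  refine ⟨by ring, ?_, ?_⟩
  · have h1 : fy - (ay + wy) > fy - (ax + wx) := by linarith
    have h2 : fy - (ay + wy) > fx - (ay + wy) := by linarith
    calc max (fy - (ax + wx)) (fx - (ay + wy)) < fy - (ay + wy) := by
          exact max_lt h1 h2
      _ ≤ max (fx - (ax + wx)) (fy - (ay + wy)) := le_max_right _ _
  · rcases abs_cases (fx - (ax + wx)) with ⟨e1, h1⟩ | ⟨e1, h1⟩ <;>
    rcases abs_cases (fy - (ay + wy)) with ⟨e2, h2⟩ | ⟨e2, h2⟩ <;>
    rcases abs_cases (fy - (ax + wx)) with ⟨e3, h3⟩ | ⟨e3, h3⟩ <;>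
    rcases abs_cases (fx - (ay + wy)) with ⟨e4, h4⟩ | ⟨e4, h4⟩ <;>
    rw [e1, e2, e3, e4] <;> linarith
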